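/- arXiv:1212.1746 — 6 statements merged into one kernel-verified Lean document; each statement's English description precedes it below -/
import Mathlib

section
/- Let Ω ⊆ ℂ be open and let q, p : Ω → ℂ be holomorphic functions satisfying q'(x) = p(x) − q(x)² − x/2 and p'(x) = 2q(x)p(x) + α + 1/2 on Ω, with p(x) ≠ 0 for all x ∈ Ω. Then p satisfies the thirty-fourth Painlevé equation p''(x) = (p'(x))²/(2p(x)) + 2p(x)² − x·p(x) − β/(2p(x)) on Ω, where β = (α + 1/2)². -/
/-!
Hamilton's equations give `p'' = 2 q' p + 2 q p'` with `q' = p - q² - x/2`, and the second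
equation `p' = 2 q p + (α + 1/2)` can be solved for `q = (p' - α - 1/2) / (2p)`
wherever `p ≠ 0`; substituting this value of `q` leaves an equation in `p` alone, which is P34
with `β = (α + 1/2)²`.
-/

theorem hasDerivAt_deriv_of_forall_hasDerivAt {𝕜 F : Type*} [NontriviallyNormedField 𝕜]
    [NormedAddCommGroup F] [NormedSpace 𝕜 F] {Ω : Set 𝕜} (hΩ : IsOpen Ω) {f g : 𝕜 → F}
    (hf : ∀ y ∈ Ω, HasDerivAt f (g y) y) {x : 𝕜} (hx : x ∈ Ω) {g' : F}
    (hg : HasDerivAt g g' x) : HasDerivAt (deriv f) g' x :=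
  hg.congr_of_eventuallyEq <| Filter.eventually_of_mem (hΩ.mem_nhds hx) fun y hy => (hf y hy).deriv

theorem painleve34_rhs_eq_of_eq_two_mul_mul_add {x p q dp c : ℂ} (hp : p ≠ 0)
    (hdp : dp = 2 * q * p + c) :
    2 * (p - q ^ 2 - x / 2) * p + 2 * q * dp
      = dp ^ 2 / (2 * p) + 2 * p ^ 2 - x * p - c ^ 2 / (2 * p) := by
  subst hdp
  field_simp
  ring

/-- If holomorphic `q, p` on an open set `Ω ⊆ ℂ` satisfy Hamilton's equations
`q' = p - q² - x/2` and `p' = 2qp + α + 1/2`, and `p` is nowhere zero on `Ω`,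
then `p` satisfies the thirty-fourth Painlevé equation
`p'' = (p')²/(2p) + 2p² - x p - β/(2p)` with `β = (α + 1/2)²` on `Ω`. -/
theorem painleve34_from_hamiltonian_system
    (Ω : Set ℂ) (hΩ : IsOpen Ω) (α : ℂ) (q p : ℂ → ℂ)
    (hq : ∀ x ∈ Ω, HasDerivAt q (p x - q x ^ 2 - x / 2) x)
    (hp : ∀ x ∈ Ω, HasDerivAt p (2 * q x * p x + α + 1 / 2) x)
    (hp0 : ∀ x ∈ Ω, p x ≠ 0) :
    ∀ x ∈ Ω, HasDerivAt (deriv p)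
      ((deriv p x) ^ 2 / (2 * p x) + 2 * p x ^ 2 - x * p x
        - (α + 1 / 2) ^ 2 / (2 * p x)) x := by
  intro x hx
  have hp' : HasDerivAt (fun y => 2 * q y * p y + α + 1 / 2)
      (2 * (p x - q x ^ 2 - x / 2) * p x + 2 * q x * (2 * q x * p x + α + 1 / 2)) x := by
    refine ((((hq x hx).const_mul 2).mul (hp x hx)).add_const α |>.add_const (1 / 2)).congr_deriv
      ?_
    ring
  rw [(hp x hx).deriv, ← painleve34_rhs_eq_of_eq_two_mul_mul_add (hp0 x hx) (add_assoc _ _ _)]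
  exact hasDerivAt_deriv_of_forall_hasDerivAt hΩ hp hx hp'
end

section
/- Let Ω ⊆ ℂ ∖ {0} be open and let u, v : Ω → ℂ be holomorphic functions satisfying the Boutroux–Painlevé system with parameter α ∈ ℂ: u̇ = v − u² − 1/2 − u/(3z) and v̇ = 2uv + (2α+1)/(3z) − 2v/(3z). Define the energy E(z) := v(z)²/2 − u(z)²v(z) − v(z)/2. Then E is holomorphic on Ω and satisfies Ė(z) = −4E(z)/(3z) + (4α·v(z) − (2α+1)(2u(z)² + 1))/(6z) for all z ∈ Ω. -/
/-! `E` is a first integral of the autonomous system `u̇ = v - u² - 1/2`, `v̇ = 2uv`, so in `Ė`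
only the `1/z`-terms of the Boutroux–Painlevé system survive; collecting them is a polynomial
identity in `u`, `v` and `z⁻¹`. -/

theorem HasDerivAt.boutroux_energy {𝕜 : Type*} [NontriviallyNormedField 𝕜] [CharZero 𝕜]
    {u v : 𝕜 → 𝕜} {u' v' z : 𝕜} (hu : HasDerivAt u u' z) (hv : HasDerivAt v v' z) :
    HasDerivAt (fun w => v w ^ 2 / 2 - u w ^ 2 * v w - v w / 2)
      (v z * v' - (2 * u z * u' * v z + u z ^ 2 * v') - v' / 2) z := by
  have hv2 : HasDerivAt (fun w => v w ^ 2) (2 * v z * v') z := by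
    simpa using hv.fun_pow 2
  have hu2 : HasDerivAt (fun w => u w ^ 2) (2 * u z * u') z := by
    simpa using hu.fun_pow 2
  exact (((hv2.div_const 2).fun_sub (hu2.fun_mul hv)).fun_sub (hv.div_const 2)).congr_deriv
    (by ring)

theorem boutroux_energy_rate_eq {K : Type*} [Field K] [CharZero K] (α u v z : K) :
    v * (2 * u * v + (2 * α + 1) / (3 * z) - 2 * v / (3 * z))
        - (2 * u * (v - u ^ 2 - 1 / 2 - u / (3 * z)) * v
          + u ^ 2 * (2 * u * v + (2 * α + 1) / (3 * z) - 2 * v / (3 * z)))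
        - (2 * u * v + (2 * α + 1) / (3 * z) - 2 * v / (3 * z)) / 2
      = -(4 * (v ^ 2 / 2 - u ^ 2 * v - v / 2)) / (3 * z)
        + (4 * α * v - (2 * α + 1) * (2 * u ^ 2 + 1)) / (6 * z) := by
  ring

theorem boutroux_energy_derivative_general
    (Ω : Set ℂ) (α : ℂ) (u v : ℂ → ℂ)
    (hu : ∀ z ∈ Ω, HasDerivAt u (v z - u z ^ 2 - 1 / 2 - u z / (3 * z)) z)
    (hv : ∀ z ∈ Ω, HasDerivAt v
      (2 * u z * v z + (2 * α + 1) / (3 * z) - 2 * v z / (3 * z)) z)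
    (E : ℂ → ℂ) (hE : ∀ z, E z = v z ^ 2 / 2 - u z ^ 2 * v z - v z / 2) :
    DifferentiableOn ℂ E Ω ∧
      ∀ z ∈ Ω, HasDerivAt E
        (-(4 * E z) / (3 * z) + (4 * α * v z - (2 * α + 1) * (2 * u z ^ 2 + 1)) / (6 * z)) z := by
  have hE' : ∀ z ∈ Ω, HasDerivAt E
      (-(4 * E z) / (3 * z) + (4 * α * v z - (2 * α + 1) * (2 * u z ^ 2 + 1)) / (6 * z)) z := by
    intro z hz
    rw [funext hE, ← boutroux_energy_rate_eq]
    exact (hu z hz).boutroux_energy (hv z hz)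
  exact ⟨fun z hz => (hE' z hz).differentiableAt.differentiableWithinAt, hE'⟩

/-- If holomorphic `u, v` on an open set `Ω ⊆ ℂ ∖ {0}` satisfy the
Boutroux–Painlevé system with parameter `α`, then the energy
`E = v²/2 - u²v - v/2` is holomorphic on `Ω` and satisfies
`Ė = -4E/(3z) + (4αv - (2α+1)(2u² + 1))/(6z)` on `Ω`. -/
theorem boutroux_energy_derivative
    (Ω : Set ℂ) (hΩ : IsOpen Ω) (hΩ0 : ∀ z ∈ Ω, z ≠ 0) (α : ℂ) (u v : ℂ → ℂ)
    (hu : ∀ z ∈ Ω, HasDerivAt u (v z - u z ^ 2 - 1 / 2 - u z / (3 * z)) z)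
    (hv : ∀ z ∈ Ω, HasDerivAt v
      (2 * u z * v z + (2 * α + 1) / (3 * z) - 2 * v z / (3 * z)) z)
    (E : ℂ → ℂ) (hE : ∀ z, E z = v z ^ 2 / 2 - u z ^ 2 * v z - v z / 2) :
    DifferentiableOn ℂ E Ω ∧
      ∀ z ∈ Ω, HasDerivAt E
        (-(4 * E z) / (3 * z) + (4 * α * v z - (2 * α + 1) * (2 * u z ^ 2 + 1)) / (6 * z)) z :=
  boutroux_energy_derivative_general Ω α u v hu hv E hE
end

section
/- Let ε ∈ {1, −1}, let Ω ⊆ ℂ be open, and let y : Ω → ℂ be a holomorphic solution of the second Painlevé equation y'' = 2y³ + x·y + α with parameter α ∈ ℂ. Suppose D(x) := 2y(x)² + 2ε·y'(x) + x ≠ 0 for all x ∈ Ω. Then the Bäcklund transform ỹ(x) := −y(x) − (2α + ε)/D(x) is a holomorphic solution of the second Painlevé equation with parameter α + ε: ỹ'' = 2ỹ³ + x·ỹ + (α + ε) on Ω. -/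
/-!
Write `D = 2y² + 2εy' + x` and `c = 2α + ε`. Since `ε² = 1`, the Painlevé equation turns the
derivative of `D` into `D' = ε (2yD + c)`. From this, `ỹ = -y - c/D` satisfies the first-order
relation `2ỹ² - 2εỹ' + x = D`, so that `T^{-ε}` undoes `T^ε`. Differentiating this relation once
more and using `(ỹ + y) D = -c` gives `ỹ'' = 2ỹ³ + xỹ + α + ε`.
-/

namespace PainleveII

variable {𝕜 : Type*} [NontriviallyNormedField 𝕜]

def denom (ε : 𝕜) (y y' : 𝕜 → 𝕜) (x : 𝕜) : 𝕜 :=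
  2 * y x ^ 2 + 2 * ε * y' x + x

def backlund (ε α : 𝕜) (y y' : 𝕜 → 𝕜) (x : 𝕜) : 𝕜 :=
  -y x - (2 * α + ε) / denom ε y y' x

/-- The derivative of `backlund ε α y y'`, solved from `2ỹ² - 2εỹ' + x = denom ε y y'`. -/
def backlundDeriv (ε α : 𝕜) (y y' : 𝕜 → 𝕜) (x : 𝕜) : 𝕜 :=
  ε * (2 * backlund ε α y y' x ^ 2 + x - denom ε y y' x) / 2

variable {ε α : 𝕜} {y y' : 𝕜 → 𝕜} {x : 𝕜}

theorem hasDerivAt_denom (hε : ε ^ 2 = 1) (hy : HasDerivAt y (y' x) x)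
    (hy' : HasDerivAt y' (2 * y x ^ 3 + x * y x + α) x) :
    HasDerivAt (denom ε y y') (ε * (2 * y x * denom ε y y' x + (2 * α + ε))) x := by
  refine ((((hy.fun_pow 2).const_mul 2).fun_add (hy'.const_mul (2 * ε))).fun_add
    (hasDerivAt_id' x)).congr_deriv ?_
  simp only [denom]
  linear_combination (-(4 * y x * y' x + 1)) * hε

theorem hasDerivAt_backlund [CharZero 𝕜] (hε : ε ^ 2 = 1) (hy : HasDerivAt y (y' x) x)
    (hy' : HasDerivAt y' (2 * y x ^ 3 + x * y x + α) x) (hD : denom ε y y' x ≠ 0) :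
    HasDerivAt (backlund ε α y y') (backlundDeriv ε α y y' x) x := by
  refine (hy.fun_neg.fun_sub ((hasDerivAt_const x (2 * α + ε)).fun_div
    (hasDerivAt_denom hε hy hy') hD)).congr_deriv ?_
  simp only [backlundDeriv, backlund]
  have hd : denom ε y y' x = 2 * y x ^ 2 + 2 * ε * y' x + x := rfl
  generalize denom ε y y' x = d at hd hD ⊢
  field_simp
  linear_combination (ε * d ^ 2) * hd + (2 * y' x * d ^ 2) * hε

theorem hasDerivAt_backlundDeriv [CharZero 𝕜] (hε : ε ^ 2 = 1) (hy : HasDerivAt y (y' x) x)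
    (hy' : HasDerivAt y' (2 * y x ^ 3 + x * y x + α) x) (hD : denom ε y y' x ≠ 0) :
    HasDerivAt (backlundDeriv ε α y y')
      (2 * backlund ε α y y' x ^ 3 + x * backlund ε α y y' x + (α + ε)) x := by
  refine (((((hasDerivAt_backlund hε hy hy' hD).fun_pow 2).const_mul 2).fun_add
    (hasDerivAt_id' x)).fun_sub (hasDerivAt_denom hε hy hy')).const_mul ε |>.div_const 2
    |>.congr_deriv ?_
  have hsum : (backlund ε α y y' x + y x) * denom ε y y' x = -(2 * α + ε) := by
    simp only [backlund]; field_simp; ring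
  simp only [backlundDeriv]
  set w := backlund ε α y y' x
  set d := denom ε y y' x
  linear_combination (w * (2 * w ^ 2 + x - d) - (2 * y x * d + (2 * α + ε)) / 2) * hε - hsum

end PainleveII

open PainleveII Filter Topology

/-- Bäcklund transformation of PII: if `y` is a holomorphic solution of
`y'' = 2y³ + xy + α` on an open set `Ω ⊆ ℂ`, `ε = ±1`, and
`D = 2y² + 2εy' + x` is nowhere zero on `Ω`, then `ỹ = -y - (2α + ε)/D` is a
holomorphic solution of PII with parameter `α + ε` on `Ω`. -/
theorem backlund_painleveII
    (ε : ℂ) (hε : ε = 1 ∨ ε = -1) (Ω : Set ℂ) (hΩ : IsOpen Ω) (α : ℂ)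
    (y : ℂ → ℂ) (hy : DifferentiableOn ℂ y Ω)
    (hyeq : ∀ x ∈ Ω, HasDerivAt (deriv y) (2 * y x ^ 3 + x * y x + α) x)
    (hD : ∀ x ∈ Ω, 2 * y x ^ 2 + 2 * ε * deriv y x + x ≠ 0) :
    DifferentiableOn ℂ
        (fun x => -y x - (2 * α + ε) / (2 * y x ^ 2 + 2 * ε * deriv y x + x)) Ω ∧
      ∀ x ∈ Ω,
        HasDerivAt
          (deriv fun x => -y x - (2 * α + ε) / (2 * y x ^ 2 + 2 * ε * deriv y x + x))
          (2 * (-y x - (2 * α + ε) / (2 * y x ^ 2 + 2 * ε * deriv y x + x)) ^ 3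
            + x * (-y x - (2 * α + ε) / (2 * y x ^ 2 + 2 * ε * deriv y x + x))
            + (α + ε)) x := by
  have hε2 : ε ^ 2 = 1 := by rcases hε with rfl | rfl <;> norm_num
  have hy' (x : ℂ) (hx : x ∈ Ω) : HasDerivAt y (deriv y x) x :=
    (hy.differentiableAt (hΩ.mem_nhds hx)).hasDerivAt
  have hbacklund (x : ℂ) (hx : x ∈ Ω) :
      HasDerivAt (backlund ε α y (deriv y)) (backlundDeriv ε α y (deriv y) x) x :=
    hasDerivAt_backlund hε2 (hy' x hx) (hyeq x hx) (hD x hx)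
  refine ⟨fun x hx => (hbacklund x hx).differentiableAt.differentiableWithinAt, fun x hx => ?_⟩
  have hderiv : deriv (backlund ε α y (deriv y)) =ᶠ[𝓝 x] backlundDeriv ε α y (deriv y) :=
    eventually_of_mem (hΩ.mem_nhds hx) fun t ht => (hbacklund t ht).deriv
  exact (hasDerivAt_backlundDeriv hε2 (hy' x hx) (hyeq x hx) (hD x hx)).congr_of_eventuallyEq hderiv
end

section
/- Let Ω ⊆ ℂ ∖ {0} be open. (i) If α = 1/2 and u : Ω → ℂ is a holomorphic solution of the Riccati equation u̇ = u² + 1/2 − u/(3z), then the pair (u, v) with v(z) = 2u(z)² + 1 satisfies the Boutroux–Painlevé system with parameter α = 1/2 on Ω. (ii) Conversely, if u, v : Ω → ℂ solve the Boutroux–Painlevé system with parameter α ∈ ℂ on Ω and v(z) = 2u(z)² + 1 for all z ∈ Ω, then α = 1/2 and u satisfies u̇ = u² + 1/2 − u/(3z) on Ω. -/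
/-!
On the parabola `v = 2u² + 1` the first Boutroux–Painlevé equation becomes the Riccati equation
`u̇ = u² + 1/2 - u/(3z)`, and differentiating `2u² + 1` along it gives `4u u̇`, which differs from
the right-hand side of the second equation by exactly `(2α - 1)/(3z)`. So the parabola is
invariant precisely when `α = 1/2`; at a single point of `Ω` uniqueness of derivatives forces it.
-/

theorem HasDerivAt.two_mul_sq_add_one {𝕜 𝔸 : Type*} [NontriviallyNormedField 𝕜]
    [NormedCommRing 𝔸] [NormedAlgebra 𝕜 𝔸] {f : 𝕜 → 𝔸} {f' : 𝔸} {x : 𝕜}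
    (hf : HasDerivAt f f' x) :
    HasDerivAt (fun w => 2 * f w ^ 2 + 1) (4 * f x * f') x :=
  (((hf.fun_pow 2).const_mul 2).add_const 1).congr_deriv (by push_cast; ring)

namespace BoutrouxPainleve

noncomputable section

def riccatiRhs (z u : ℂ) : ℂ := u ^ 2 + 1 / 2 - u / (3 * z)

def rhsU (z u v : ℂ) : ℂ := v - u ^ 2 - 1 / 2 - u / (3 * z)

def rhsV (α z u v : ℂ) : ℂ := 2 * u * v + (2 * α + 1) / (3 * z) - 2 * v / (3 * z)

theorem rhsU_parabola (z u : ℂ) : rhsU z u (2 * u ^ 2 + 1) = riccatiRhs z u := by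
  unfold rhsU riccatiRhs
  ring

theorem rhsV_parabola (α z u : ℂ) :
    rhsV α z u (2 * u ^ 2 + 1) = 4 * u * riccatiRhs z u + (2 * α - 1) / (3 * z) := by
  unfold rhsV riccatiRhs
  ring

end

theorem hasDerivAt_of_riccati {u : ℂ → ℂ} {z : ℂ}
    (hu : HasDerivAt u (riccatiRhs z (u z)) z) :
    HasDerivAt u (rhsU z (u z) (2 * u z ^ 2 + 1)) z ∧
      HasDerivAt (fun w => 2 * u w ^ 2 + 1) (rhsV (1 / 2) z (u z) (2 * u z ^ 2 + 1)) z := by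
  refine ⟨hu.congr_deriv (rhsU_parabola z (u z)).symm, ?_⟩
  refine hu.two_mul_sq_add_one.congr_deriv ?_
  rw [rhsV_parabola]
  ring

theorem alpha_eq_half_of_parabola {α z : ℂ} {u v : ℂ → ℂ} (hz : z ≠ 0)
    (hu : HasDerivAt u (rhsU z (u z) (v z)) z) (hv : HasDerivAt v (rhsV α z (u z) (v z)) z)
    (hpar : v =ᶠ[nhds z] fun w => 2 * u w ^ 2 + 1) :
    α = 1 / 2 := by
  have hvz : v z = 2 * u z ^ 2 + 1 := hpar.eq_of_nhds
  have hv' := hu.two_mul_sq_add_one.congr_of_eventuallyEq hpar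
  have hdiv : (2 * α - 1) / (3 * z) = 0 := by
    have h := hv.unique hv'
    rw [hvz, rhsU_parabola, rhsV_parabola] at h
    linear_combination h
  rcases div_eq_zero_iff.mp hdiv with h | h
  · linear_combination h / 2
  · exact absurd h (mul_ne_zero three_ne_zero hz)

end BoutrouxPainleve

open BoutrouxPainleve

/-- (i) For `α = 1/2`, a holomorphic solution `u` of the Riccati equation
`u̇ = u² + 1/2 - u/(3z)` on an open set `Ω ⊆ ℂ ∖ {0}` yields a solution
`(u, v = 2u² + 1)` of the Boutroux–Painlevé system with parameter `α = 1/2`.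
(ii) Conversely, if `(u, v)` solve the Boutroux–Painlevé system with parameter
`α` on `Ω` and `v = 2u² + 1` on `Ω`, then `α = 1/2` and `u` satisfies the
Riccati equation `u̇ = u² + 1/2 - u/(3z)`. -/
theorem riccati_and_v_parabola_locus
    (Ω : Set ℂ) (hΩ : IsOpen Ω) (hΩ0 : ∀ z ∈ Ω, z ≠ 0) (hne : Ω.Nonempty) :
    (∀ u : ℂ → ℂ,
      (∀ z ∈ Ω, HasDerivAt u (u z ^ 2 + 1 / 2 - u z / (3 * z)) z) →
      (∀ z ∈ Ω, HasDerivAt u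
          ((fun w => 2 * u w ^ 2 + 1) z - u z ^ 2 - 1 / 2 - u z / (3 * z)) z) ∧
        (∀ z ∈ Ω, HasDerivAt (fun w => 2 * u w ^ 2 + 1)
          (2 * u z * (fun w => 2 * u w ^ 2 + 1) z + (2 * ((1 : ℂ) / 2) + 1) / (3 * z)
            - 2 * (fun w => 2 * u w ^ 2 + 1) z / (3 * z)) z)) ∧
    (∀ (α : ℂ) (u v : ℂ → ℂ),
      (∀ z ∈ Ω, HasDerivAt u (v z - u z ^ 2 - 1 / 2 - u z / (3 * z)) z) →
      (∀ z ∈ Ω, HasDerivAt v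
        (2 * u z * v z + (2 * α + 1) / (3 * z) - 2 * v z / (3 * z)) z) →
      (∀ z ∈ Ω, v z = 2 * u z ^ 2 + 1) →
      α = 1 / 2 ∧
        ∀ z ∈ Ω, HasDerivAt u (u z ^ 2 + 1 / 2 - u z / (3 * z)) z) := by
  refine ⟨fun u hu => ⟨fun z hz => (hasDerivAt_of_riccati (hu z hz)).1,
    fun z hz => (hasDerivAt_of_riccati (hu z hz)).2⟩, fun α u v hu hv hpar => ⟨?_, ?_⟩⟩
  · obtain ⟨z₀, hz₀⟩ := hne
    exact alpha_eq_half_of_parabola (hΩ0 z₀ hz₀) (hu z₀ hz₀) (hv z₀ hz₀)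
      (Filter.eventuallyEq_of_mem (hΩ.mem_nhds hz₀) hpar)
  · intro z hz
    have h : HasDerivAt u (rhsU z (u z) (2 * u z ^ 2 + 1)) z := hpar z hz ▸ hu z hz
    exact h.congr_deriv (rhsU_parabola z (u z))
end

section
/- Let z₀ ∈ ℂ ∖ {0} and let y be a holomorphic solution of the Boutroux–Airy equation ÿ + ẏ/(3z) + y/2 = 0 on a neighborhood of z₀ not containing 0, with y(z₀) = 0 and ẏ(z₀) ≠ 0. Then u := ẏ/y, defined on a punctured neighborhood of z₀, is meromorphic with a simple pole at z₀ of residue 1, and lim_{z→z₀} ( u(z) − 1/(z − z₀) ) = −1/(6z₀). In particular, the corresponding Airy-type solution u of the Boutroux form of PII with α = −1/2 has a simple pole with residue 1 at each zero of y. -/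
/-!
Near a simple zero `z₀` we can write `y = (z - z₀) g` with `g` holomorphic and
`g z₀ = y'(z₀) ≠ 0`. Then `y'/y = 1/(z - z₀) + g'/g`, so `y'/y - 1/(z - z₀)` tends to
`g'(z₀)/g(z₀) = y''(z₀)/(2 y'(z₀))`, and `(z - z₀) y'/y → 1`. Evaluating the Boutroux–Airy
equation at `z₀`, where `y` vanishes, gives `y''(z₀) = -y'(z₀)/(3 z₀)`, whence the limit
`-1/(6 z₀)`.
-/

open Filter Topology

theorem AnalyticAt.dslope {𝕜 E : Type*} [NontriviallyNormedField 𝕜] [NormedAddCommGroup E]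
    [NormedSpace 𝕜 E] {f : 𝕜 → E} {a : 𝕜} (hf : AnalyticAt 𝕜 f a) :
    AnalyticAt 𝕜 (dslope f a) a := by
  obtain ⟨p, hp⟩ := hf
  exact hp.has_fpower_series_dslope_fslope.analyticAt

section SimpleZero

variable {𝕜 : Type*} [NontriviallyNormedField 𝕜] {g : 𝕜 → 𝕜} {a z : 𝕜}

theorem hasDerivAt_sub_mul {g' : 𝕜} (hg : HasDerivAt g g' z) :
    HasDerivAt (fun w => (w - a) * g w) (g z + (z - a) * g') z :=
  (((hasDerivAt_id' z).sub_const a).mul hg).congr_deriv (by ring)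

theorem logDeriv_sub_mul (hz : z ≠ a) (hgz : g z ≠ 0) (hg : DifferentiableAt 𝕜 g z) :
    logDeriv (fun w => (w - a) * g w) z = 1 / (z - a) + logDeriv g z := by
  rw [logDeriv_mul (f := fun w => w - a) z (sub_ne_zero.2 hz) hgz
    (differentiableAt_id.sub_const a) hg]
  simp [logDeriv_apply]

variable [CompleteSpace 𝕜]

theorem deriv_deriv_sub_mul (hg : AnalyticAt 𝕜 g a) :
    deriv (deriv fun w => (w - a) * g w) a = 2 * deriv g a := by
  have hderiv : (deriv fun w => (w - a) * g w) =ᶠ[𝓝 a] fun z => g z + (z - a) * deriv g z := by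
    filter_upwards [hg.eventually_analyticAt] with z hz
    exact (hasDerivAt_sub_mul hz.differentiableAt.hasDerivAt).deriv
  rw [hderiv.deriv_eq, (hg.differentiableAt.hasDerivAt.fun_add
    (hasDerivAt_sub_mul (a := a) hg.deriv.differentiableAt.hasDerivAt)).deriv]
  ring

theorem tendsto_logDeriv_sub_mul_sub_one_div_sub (hg : AnalyticAt 𝕜 g a) (hga : g a ≠ 0) :
    Tendsto (fun z => logDeriv (fun w => (w - a) * g w) z - 1 / (z - a)) (𝓝[≠] a)
      (𝓝 (logDeriv g a)) := by
  have hlim : Tendsto (logDeriv g) (𝓝 a) (𝓝 (logDeriv g a)) :=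
    (hg.deriv.continuousAt.div hg.continuousAt hga).tendsto
  refine (hlim.mono_left nhdsWithin_le_nhds).congr' ?_
  filter_upwards [(hg.continuousAt.eventually_ne hga).filter_mono nhdsWithin_le_nhds,
    hg.eventually_analyticAt.filter_mono nhdsWithin_le_nhds, self_mem_nhdsWithin]
    with z hgz hgz' hz
  rw [logDeriv_sub_mul hz hgz hgz'.differentiableAt]
  ring

theorem tendsto_logDeriv_sub_one_div_sub_of_deriv_ne_zero [CharZero 𝕜] {f : 𝕜 → 𝕜}
    (hf : AnalyticAt 𝕜 f a) (h0 : f a = 0) (h1 : deriv f a ≠ 0) :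
    Tendsto (fun z => logDeriv f z - 1 / (z - a)) (𝓝[≠] a)
      (𝓝 (deriv (deriv f) a / (2 * deriv f a))) := by
  obtain ⟨g, hg, rfl⟩ : ∃ g, AnalyticAt 𝕜 g a ∧ f = fun z => (z - a) * g z :=
    ⟨dslope f a, hf.dslope, funext fun z => (sub_smul_dslope_of_zero h0 z).symm⟩
  have hfa : deriv (fun z => (z - a) * g z) a = g a := by
    simpa using (hasDerivAt_sub_mul (a := a) hg.differentiableAt.hasDerivAt).deriv
  rw [hfa] at h1 ⊢
  rw [deriv_deriv_sub_mul hg, mul_div_mul_left _ _ two_ne_zero]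
  exact tendsto_logDeriv_sub_mul_sub_one_div_sub hg h1

end SimpleZero

theorem tendsto_sub_mul_of_tendsto_sub_one_div_sub {𝕜 : Type*} [NontriviallyNormedField 𝕜]
    {u : 𝕜 → 𝕜} {a L : 𝕜} (h : Tendsto (fun z => u z - 1 / (z - a)) (𝓝[≠] a) (𝓝 L)) :
    Tendsto (fun z => (z - a) * u z) (𝓝[≠] a) (𝓝 1) := by
  have hsub : Tendsto (fun z => z - a) (𝓝[≠] a) (𝓝 0) :=
    ((continuous_sub_right a).tendsto' a 0 (sub_self a)).mono_left nhdsWithin_le_nhds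
  have := tendsto_const_nhds (x := (1 : 𝕜)).add (hsub.mul h)
  rw [zero_mul, add_zero] at this
  refine this.congr' ?_
  filter_upwards [self_mem_nhdsWithin] with z hz
  rw [mul_sub, mul_one_div_cancel (sub_ne_zero.2 hz)]
  ring

theorem boutroux_airy_zero_gives_pole_general
    (Ω : Set ℂ) (hΩ : IsOpen Ω) (z₀ : ℂ) (hz₀ : z₀ ∈ Ω)
    (y : ℂ → ℂ) (hy : DifferentiableOn ℂ y Ω)
    (hyeq : ∀ z ∈ Ω, HasDerivAt (deriv y) (-(deriv y z / (3 * z)) - y z / 2) z)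
    (hy0 : y z₀ = 0) (hy1 : deriv y z₀ ≠ 0) :
    (∀ᶠ z in nhdsWithin z₀ ({z₀}ᶜ : Set ℂ), y z ≠ 0) ∧
      Filter.Tendsto (fun z => (z - z₀) * (deriv y z / y z))
        (nhdsWithin z₀ ({z₀}ᶜ : Set ℂ)) (nhds 1) ∧
      Filter.Tendsto (fun z => deriv y z / y z - 1 / (z - z₀))
        (nhdsWithin z₀ ({z₀}ᶜ : Set ℂ)) (nhds (-(1 / (6 * z₀)))) := by
  have hy_an : AnalyticAt ℂ y z₀ := hy.analyticAt (hΩ.mem_nhds hz₀)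
  have hy2 : deriv (deriv y) z₀ = -(deriv y z₀ / (3 * z₀)) := by
    simpa [hy0] using (hyeq z₀ hz₀).deriv
  have hres : deriv (deriv y) z₀ / (2 * deriv y z₀) = -(1 / (6 * z₀)) := by
    rw [hy2]
    grind
  have hlim := tendsto_logDeriv_sub_one_div_sub_of_deriv_ne_zero hy_an hy0 hy1
  rw [hres] at hlim
  exact ⟨hy_an.differentiableAt.hasDerivAt.eventually_ne hy1,
    tendsto_sub_mul_of_tendsto_sub_one_div_sub hlim, hlim⟩

/-- If `y` is a holomorphic solution of the Boutroux–Airy equation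
`ÿ + ẏ/(3z) + y/2 = 0` near `z₀ ≠ 0` with `y(z₀) = 0` and `ẏ(z₀) ≠ 0`, then
`u = ẏ/y` is defined on a punctured neighbourhood of `z₀`, has a simple pole
at `z₀` with residue `1` (i.e. `(z - z₀)·u(z) → 1`), and
`u(z) - 1/(z - z₀) → -1/(6z₀)` as `z → z₀`. -/
theorem boutroux_airy_zero_gives_pole
    (Ω : Set ℂ) (hΩ : IsOpen Ω) (z₀ : ℂ) (hz₀ : z₀ ∈ Ω) (hΩ0 : ∀ z ∈ Ω, z ≠ 0)
    (y : ℂ → ℂ) (hy : DifferentiableOn ℂ y Ω)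
    (hyeq : ∀ z ∈ Ω, HasDerivAt (deriv y) (-(deriv y z / (3 * z)) - y z / 2) z)
    (hy0 : y z₀ = 0) (hy1 : deriv y z₀ ≠ 0) :
    (∀ᶠ z in nhdsWithin z₀ ({z₀}ᶜ : Set ℂ), y z ≠ 0) ∧
      Filter.Tendsto (fun z => (z - z₀) * (deriv y z / y z))
        (nhdsWithin z₀ ({z₀}ᶜ : Set ℂ)) (nhds 1) ∧
      Filter.Tendsto (fun z => deriv y z / y z - 1 / (z - z₀))
        (nhdsWithin z₀ ({z₀}ᶜ : Set ℂ)) (nhds (-(1 / (6 * z₀)))) :=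
  boutroux_airy_zero_gives_pole_general Ω hΩ z₀ hz₀ y hy hyeq hy0 hy1
end

section
/- Let r > 0 and let u, v : {z ∈ ℂ : |z| > r} → ℂ be bounded holomorphic functions satisfying the Boutroux–Painlevé system with parameter α ∈ ℂ: u̇ = v − u² − 1/2 − u/(3z), v̇ = 2uv + (2α+1)/(3z) − 2v/(3z). Then the limits u∞ := lim_{|z|→∞} u(z) and v∞ := lim_{|z|→∞} v(z) exist, and (u∞, v∞) is an equilibrium point of the autonomous system: v∞ − u∞² − 1/2 = 0 and 2u∞·v∞ = 0; hence (u∞, v∞) ∈ {(0, 1/2), (i/√2, 0), (−i/√2, 0)}. -/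
/-!
A bounded holomorphic function near `∞` has a removable singularity there, so `u` and `v` have
limits, and by Cauchy's estimate on discs of radius `|z| / 2` their derivatives tend to `0`.
Letting `z → ∞` in the system, the `1 / z` terms vanish, so the limit is a zero of the
autonomous vector field `(v - u² - 1/2, 2uv)`.
-/

open Filter Topology Bornology Metric

section BoundedAtInfinity

variable {E : Type*} [NormedAddCommGroup E] [NormedSpace ℂ E] {f : ℂ → E}

theorem tendsto_deriv_cobounded_zero_of_isBoundedUnder
    (hd : ∀ᶠ z in cobounded ℂ, DifferentiableAt ℂ f z)
    (hb : IsBoundedUnder (· ≤ ·) (cobounded ℂ) (‖f ·‖)) :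
    Tendsto (deriv f) (cobounded ℂ) (𝓝 0) := by
  obtain ⟨M, hM⟩ := hb
  obtain ⟨R, -, hR⟩ := ((atTop_basis_Ioi.cobounded_of_norm).eventually_iff).1
    (hd.and (eventually_map.1 hM))
  have hdiff : DifferentiableOn ℂ f (norm ⁻¹' Set.Ioi R) :=
    fun w hw => (hR hw).1.differentiableWithinAt
  have hbound : ∀ᶠ z in cobounded ℂ, ‖deriv f z‖ ≤ M / (‖z‖ / 2) := by
    filter_upwards [tendsto_norm_cobounded_atTop.eventually_gt_atTop (2 * max R 0)] with z hz
    have hz0 : 0 < ‖z‖ / 2 := by linarith [le_max_right R 0]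
    have hdisc : closedBall z (‖z‖ / 2) ⊆ norm ⁻¹' Set.Ioi R := fun w hw => by
      rw [mem_closedBall, dist_eq_norm, norm_sub_rev] at hw
      have := norm_sub_norm_le z w
      simp only [Set.mem_preimage, Set.mem_Ioi]
      linarith [le_max_left R 0]
    exact Complex.norm_deriv_le_of_forall_mem_sphere_norm_le hz0 (hdiff.diffContOnCl_ball hdisc)
      fun w hw => (hR (hdisc (sphere_subset_closedBall hw))).2
  refine squeeze_zero_norm' hbound (tendsto_const_nhds.div_atTop ?_)
  exact tendsto_norm_cobounded_atTop.atTop_div_const two_pos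

variable [CompleteSpace E]

theorem exists_tendsto_cobounded_of_isBoundedUnder
    (hd : ∀ᶠ z in cobounded ℂ, DifferentiableAt ℂ f z)
    (hb : IsBoundedUnder (· ≤ ·) (cobounded ℂ) (‖f ·‖)) :
    ∃ L, Tendsto f (cobounded ℂ) (𝓝 L) := by
  set g : ℂ → E := fun w => f w⁻¹
  have hgd : ∀ᶠ w in 𝓝[≠] 0, DifferentiableAt ℂ g w := by
    filter_upwards [tendsto_inv₀_nhdsNE_zero.eventually hd, self_mem_nhdsWithin] with w hw hw0
    exact hw.comp w (differentiableAt_inv hw0)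
  have hgb : IsBoundedUnder (· ≤ ·) (𝓝[≠] 0) fun w => ‖g w - g 0‖ := by
    obtain ⟨M, hM⟩ := hb
    refine ⟨M + ‖g 0‖, eventually_map.2 ?_⟩
    filter_upwards [tendsto_inv₀_nhdsNE_zero.eventually (eventually_map.1 hM)] with w hw
    exact (norm_sub_le _ _).trans (add_le_add_left hw _)
  have := (Complex.tendsto_limUnder_of_differentiable_on_punctured_nhds_of_bounded_under
    hgd hgb).comp tendsto_inv₀_cobounded'
  exact ⟨_, by simpa [g, Function.comp_def] using this⟩

theorem exists_tendsto_cobounded_and_tendsto_deriv_zero {f' : ℂ → E}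
    (hf : ∀ᶠ z in cobounded ℂ, HasDerivAt f (f' z) z)
    (hb : IsBoundedUnder (· ≤ ·) (cobounded ℂ) (‖f ·‖)) :
    ∃ L, Tendsto f (cobounded ℂ) (𝓝 L) ∧ Tendsto f' (cobounded ℂ) (𝓝 0) := by
  have hd : ∀ᶠ z in cobounded ℂ, DifferentiableAt ℂ f z :=
    hf.mono fun _ h => h.differentiableAt
  refine (exists_tendsto_cobounded_of_isBoundedUnder hd hb).imp fun L hL => ⟨hL, ?_⟩
  refine (tendsto_deriv_cobounded_zero_of_isBoundedUnder hd hb).congr' ?_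
  filter_upwards [hf] with z hz using hz.deriv

end BoundedAtInfinity

theorem Filter.Tendsto.div_mul_cobounded {𝕜 : Type*} [NormedField 𝕜] {f : 𝕜 → 𝕜}
    {a : 𝕜} (hf : Tendsto f (cobounded 𝕜) (𝓝 a)) (c : 𝕜) :
    Tendsto (fun z => f z / (c * z)) (cobounded 𝕜) (𝓝 0) := by
  have := hf.mul ((tendsto_inv₀_cobounded (α := 𝕜)).const_mul c⁻¹)
  rw [mul_zero, mul_zero] at this
  exact this.congr fun z => by rw [div_eq_mul_inv, mul_inv]

theorem boutroux_equilibrium_cases {u v : ℂ} (h₁ : v - u ^ 2 - 1 / 2 = 0)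
    (h₂ : 2 * u * v = 0) :
    (u, v) = ((0 : ℂ), 1 / 2) ∨
      (u, v) = (Complex.I / (Real.sqrt 2 : ℂ), 0) ∨
      (u, v) = (-(Complex.I / (Real.sqrt 2 : ℂ)), 0) := by
  rcases mul_eq_zero.1 h₂ with hu | hv
  · obtain rfl : u = 0 := by simpa using hu
    left
    rw [show v = 1 / 2 by linear_combination h₁]
  · subst hv
    set c : ℂ := Complex.I / (Real.sqrt 2 : ℂ)
    have hc : c ^ 2 = -(1 / 2) := by
      rw [div_pow, Complex.I_sq, ← Complex.ofReal_pow, Real.sq_sqrt zero_le_two]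
      norm_num
    have hroots : (u - c) * (u + c) = 0 := by linear_combination (-1 : ℂ) * h₁ - hc
    rcases mul_eq_zero.1 hroots with h | h
    · exact Or.inr (Or.inl (by rw [sub_eq_zero.1 h]))
    · exact Or.inr (Or.inr (by rw [add_eq_zero_iff_eq_neg.1 h]))

theorem bounded_boutroux_solution_tendsto_equilibrium_general
    (r : ℝ) (α : ℂ) (u v : ℂ → ℂ)
    (hu : ∀ z : ℂ, r < ‖z‖ →
      HasDerivAt u (v z - u z ^ 2 - 1 / 2 - u z / (3 * z)) z)
    (hv : ∀ z : ℂ, r < ‖z‖ →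
      HasDerivAt v (2 * u z * v z + (2 * α + 1) / (3 * z) - 2 * v z / (3 * z)) z)
    (hub : ∃ M : ℝ, ∀ z : ℂ, r < ‖z‖ → ‖u z‖ ≤ M)
    (hvb : ∃ M : ℝ, ∀ z : ℂ, r < ‖z‖ → ‖v z‖ ≤ M) :
    ∃ uinf vinf : ℂ,
      Filter.Tendsto u (Filter.comap (fun z : ℂ => ‖z‖) Filter.atTop) (nhds uinf) ∧
      Filter.Tendsto v (Filter.comap (fun z : ℂ => ‖z‖) Filter.atTop) (nhds vinf) ∧
      vinf - uinf ^ 2 - 1 / 2 = 0 ∧ 2 * uinf * vinf = 0 ∧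
      ((uinf, vinf) = ((0 : ℂ), 1 / 2) ∨
        (uinf, vinf) = (Complex.I / (Real.sqrt 2 : ℂ), 0) ∨
        (uinf, vinf) = (-(Complex.I / (Real.sqrt 2 : ℂ)), 0)) := by
  have large : ∀ᶠ z in cobounded ℂ, r < ‖z‖ :=
    tendsto_norm_cobounded_atTop.eventually_gt_atTop r
  have bounded {f : ℂ → ℂ} (hf : ∃ M : ℝ, ∀ z : ℂ, r < ‖z‖ → ‖f z‖ ≤ M) :
      IsBoundedUnder (· ≤ ·) (cobounded ℂ) (‖f ·‖) :=
    hf.imp fun M hM => eventually_map.2 (large.mono hM)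
  obtain ⟨uinf, hu_lim, hu'_lim⟩ :=
    exists_tendsto_cobounded_and_tendsto_deriv_zero (large.mono hu) (bounded hub)
  obtain ⟨vinf, hv_lim, hv'_lim⟩ :=
    exists_tendsto_cobounded_and_tendsto_deriv_zero (large.mono hv) (bounded hvb)
  have h₁ : vinf - uinf ^ 2 - 1 / 2 = 0 := by
    refine tendsto_nhds_unique ?_ hu'_lim
    simpa only [sub_zero] using
      ((hv_lim.sub (hu_lim.pow 2)).sub_const (1 / 2)).sub (hu_lim.div_mul_cobounded 3)
  have h₂ : 2 * uinf * vinf = 0 := by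
    refine tendsto_nhds_unique ?_ hv'_lim
    simpa only [add_zero, sub_zero] using
      (((hu_lim.const_mul 2).mul hv_lim).add (tendsto_const_nhds.div_mul_cobounded 3)).sub
        ((hv_lim.const_mul 2).div_mul_cobounded 3)
  rw [comap_norm_atTop]
  exact ⟨uinf, vinf, hu_lim, hv_lim, h₁, h₂, boutroux_equilibrium_cases h₁ h₂⟩

/-- Bounded holomorphic solutions of the Boutroux–Painlevé system on `{|z| > r}`
have limits `u∞, v∞` as `|z| → ∞`, and `(u∞, v∞)` is an equilibrium point of the
autonomous system: `v∞ - u∞² - 1/2 = 0` and `2u∞v∞ = 0`; hence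
`(u∞, v∞) ∈ {(0, 1/2), (i/√2, 0), (-i/√2, 0)}`. -/
theorem bounded_boutroux_solution_tendsto_equilibrium
    (r : ℝ) (hr : 0 < r) (α : ℂ) (u v : ℂ → ℂ)
    (hu : ∀ z : ℂ, r < ‖z‖ →
      HasDerivAt u (v z - u z ^ 2 - 1 / 2 - u z / (3 * z)) z)
    (hv : ∀ z : ℂ, r < ‖z‖ →
      HasDerivAt v (2 * u z * v z + (2 * α + 1) / (3 * z) - 2 * v z / (3 * z)) z)
    (hub : ∃ M : ℝ, ∀ z : ℂ, r < ‖z‖ → ‖u z‖ ≤ M)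
    (hvb : ∃ M : ℝ, ∀ z : ℂ, r < ‖z‖ → ‖v z‖ ≤ M) :
    ∃ uinf vinf : ℂ,
      Filter.Tendsto u (Filter.comap (fun z : ℂ => ‖z‖) Filter.atTop) (nhds uinf) ∧
      Filter.Tendsto v (Filter.comap (fun z : ℂ => ‖z‖) Filter.atTop) (nhds vinf) ∧
      vinf - uinf ^ 2 - 1 / 2 = 0 ∧ 2 * uinf * vinf = 0 ∧
      ((uinf, vinf) = ((0 : ℂ), 1 / 2) ∨
        (uinf, vinf) = (Complex.I / (Real.sqrt 2 : ℂ), 0) ∨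
        (uinf, vinf) = (-(Complex.I / (Real.sqrt 2 : ℂ)), 0)) :=
  bounded_boutroux_solution_tendsto_equilibrium_general r α u v hu hv hub hvb
end
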